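/- For every integer p and all natural numbers q, r, the determinants satisfy the recurrence c(p, q, r+2) = 2·c(p, q, r+1) − c(p, q, r). -/
import Mathlib


/-- Entry function for the matrix `C(p,q,r)` from the paper. -/
def Cent (p : ℤ) (q r : ℕ) (i j : ℕ) : ℤ :=
  if i = j ∧ i ≤ 1 then 1 - 2 * p
  else if i ≤ 1 ∧ j ≤ 1 then p
  else if 2 ≤ i ∧ i = j then 2
  else if 2 ≤ min i j ∧ max i j ≤ 1 + q ∧ max i j = min i j + 1 then -1
  else if 2 + q ≤ min i j ∧ max i j ≤ 1 + q + r ∧ max i j = min i j + 1 then -1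
  else if 1 ≤ q ∧ ((i = 1 ∧ j = 2) ∨ (i = 2 ∧ j = 1)) then -1
  else if 1 ≤ r ∧ ((i = 0 ∧ j = 2 + q) ∨ (i = 2 + q ∧ j = 0)) then -1
  else 0

/-- The matrix `C(p,q,r)`: a symmetric `(2+q+r) × (2+q+r)` integer matrix. -/
def Cmat (p : ℤ) (q r : ℕ) : Matrix (Fin (2 + q + r)) (Fin (2 + q + r)) ℤ :=
  fun i j => Cent p q r i.val j.val

/-- `c(p,q,r) = det C(p,q,r)`. -/
def cdet (p : ℤ) (q r : ℕ) : ℤ := (Cmat p q r).det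

lemma cent_ext (p : ℤ) (q : ℕ) {r s i j : ℕ} (hrs : r ≤ s)
    (hi : i ≤ 1 + q + r) (hj : j ≤ 1 + q + r) :
    Cent p q s i j = Cent p q r i j := by
  unfold Cent
  split_ifs <;> first | rfl | omega


lemma cent_diag (p : ℤ) (q r k : ℕ) (h : 2 ≤ k) : Cent p q r k k = 2 := by
  unfold Cent
  split_ifs <;> first | omega | (simp_all <;> omega) | simp_all

lemma cent_near (p : ℤ) (q r k : ℕ) (h : 2 + q ≤ k) (h2 : k + 1 ≤ 1 + q + r) :
    Cent p q r (k+1) k = -1 := by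
  unfold Cent
  split_ifs <;> first | omega | (simp_all <;> omega) | simp_all

lemma cent_near' (p : ℤ) (q r k : ℕ) (h : 2 + q ≤ k) (h2 : k + 1 ≤ 1 + q + r) :
    Cent p q r k (k+1) = -1 := by
  unfold Cent
  split_ifs <;> first | omega | (simp_all <;> omega) | simp_all

lemma cent_row0 (p : ℤ) (q r i j : ℕ) (hi : i = 1 + q + r) (hr : 2 ≤ r)
    (hj : j + 1 < i) : Cent p q r i j = 0 := by
  unfold Cent
  split_ifs <;> first | omega | (simp_all <;> omega) | simp_all

lemma cent_col0 (p : ℤ) (q r i j : ℕ) (hj : j = 1 + q + r) (hr : 2 ≤ r)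
    (hi : i + 1 < j) : Cent p q r i j = 0 := by
  unfold Cent
  split_ifs <;> first | omega | (simp_all <;> omega) | simp_all

/-- Laplace expansion for a matrix whose last row and last column vanish away
from the last two positions. -/
lemma aux_det (n : ℕ) (M : Matrix (Fin (n+1+1)) (Fin (n+1+1)) ℤ)
    (hrow : ∀ j : Fin n, M (Fin.last (n+1)) (j.castSucc.castSucc) = 0)
    (hcol : ∀ i : Fin n, M (i.castSucc.castSucc) (Fin.last (n+1)) = 0) :
    M.det = M (Fin.last (n+1)) (Fin.last (n+1)) * (M.submatrix Fin.castSucc Fin.castSucc).det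
      - M (Fin.last (n+1)) ((Fin.last n).castSucc) * M ((Fin.last n).castSucc) (Fin.last (n+1)) *
        (M.submatrix (fun i : Fin n => i.castSucc.castSucc)
          (fun j : Fin n => j.castSucc.castSucc)).det := by
  have h1 : M.det = ∑ j : Fin (n+1+1), (-1)^((n+1) + (j:ℕ)) * M (Fin.last (n+1)) j *
      (M.submatrix (Fin.last (n+1)).succAbove j.succAbove).det :=
    Matrix.det_succ_row M (Fin.last (n+1))
  rw [h1, Fin.sum_univ_castSucc, Fin.sum_univ_castSucc]
  have hz : (∑ j : Fin n, (-1)^((n+1) + ((j.castSucc.castSucc : Fin (n+1+1)):ℕ)) *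
      M (Fin.last (n+1)) (j.castSucc.castSucc) *
      (M.submatrix (Fin.last (n+1)).succAbove (j.castSucc.castSucc).succAbove).det) = 0 :=
    Finset.sum_eq_zero (fun j _ => by rw [hrow j]; ring)
  rw [hz, zero_add]
  rw [Fin.succAbove_last]
  have hs1 : ((-1 : ℤ))^((n+1) + (((Fin.last n).castSucc : Fin (n+1+1)):ℕ)) = -1 := by
    simp only [Fin.coe_castSucc, Fin.val_last]
    exact Odd.neg_one_pow ⟨n, by ring⟩
  have hs2 : ((-1 : ℤ))^((n+1) + ((Fin.last (n+1)):ℕ)) = 1 := by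
    simp only [Fin.val_last]
    exact Even.neg_one_pow ⟨n+1, by ring⟩
  rw [hs1, hs2]
  set B : Matrix (Fin (n+1)) (Fin (n+1)) ℤ :=
    M.submatrix Fin.castSucc ((Fin.last n).castSucc).succAbove with hBdef
  have hc : (((Fin.last n).castSucc : Fin (n+1+1))).succAbove (Fin.last n) = Fin.last (n+1) := by
    rw [Fin.succAbove_of_le_castSucc _ _ (le_refl _)]
    exact Fin.succ_last n
  have h2 : B.det = ∑ i : Fin (n+1), (-1)^((i:ℕ) + n) * B i (Fin.last n) *
      (B.submatrix i.succAbove (Fin.last n).succAbove).det :=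
    Matrix.det_succ_column B (Fin.last n)
  rw [Fin.sum_univ_castSucc] at h2
  have hz2 : (∑ i : Fin n, (-1)^(((i.castSucc : Fin (n+1)):ℕ) + n) * B i.castSucc (Fin.last n) *
      (B.submatrix i.castSucc.succAbove (Fin.last n).succAbove).det) = 0 := by
    refine Finset.sum_eq_zero (fun i _ => ?_)
    have : B i.castSucc (Fin.last n) = 0 := by
      show M (i.castSucc.castSucc) ((((Fin.last n).castSucc : Fin (n+1+1))).succAbove (Fin.last n)) = 0
      rw [hc]; exact hcol i
    rw [this]; ring
  rw [hz2, zero_add, Fin.succAbove_last] at h2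
  have hs3 : ((-1 : ℤ))^(((Fin.last n : Fin (n+1)):ℕ) + n) = 1 := by
    simp only [Fin.val_last]
    exact Even.neg_one_pow ⟨n, rfl⟩
  rw [hs3, one_mul] at h2
  have hB1 : B (Fin.last n) (Fin.last n) = M ((Fin.last n).castSucc) (Fin.last (n+1)) := by
    show M ((Fin.last n).castSucc) ((((Fin.last n).castSucc : Fin (n+1+1))).succAbove (Fin.last n)) = _
    rw [hc]
  have hB2 : B.submatrix Fin.castSucc Fin.castSucc
      = M.submatrix (fun i : Fin n => i.castSucc.castSucc) (fun j : Fin n => j.castSucc.castSucc) := by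
    ext i j
    show M (i.castSucc.castSucc)
        ((((Fin.last n).castSucc : Fin (n+1+1))).succAbove (j.castSucc)) = _
    rw [Fin.succAbove_of_castSucc_lt]
    · rfl
    · rw [Fin.castSucc_lt_castSucc_iff]
      exact Fin.castSucc_lt_last j
  rw [hB1, hB2] at h2
  rw [h2]
  ring

theorem c_recurrence_r (p : ℤ) (q r : ℕ) :
    cdet p q (r + 2) = 2 * cdet p q (r + 1) - cdet p q r := by
  have hrow : ∀ j : Fin (2+q+r),
      Cmat p q (r+2) (Fin.last (2+q+r+1)) (j.castSucc.castSucc) = 0 := by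
    intro j
    have hj : (j:ℕ) < 2+q+r := j.isLt
    show Cent p q (r+2) (2+q+r+1) (j : ℕ) = 0
    exact cent_row0 p q (r+2) _ _ (by omega) (by omega) (by omega)
  have hcol : ∀ i : Fin (2+q+r),
      Cmat p q (r+2) (i.castSucc.castSucc) (Fin.last (2+q+r+1)) = 0 := by
    intro i
    have hi : (i:ℕ) < 2+q+r := i.isLt
    show Cent p q (r+2) (i : ℕ) (2+q+r+1) = 0
    exact cent_col0 p q (r+2) _ _ (by omega) (by omega) (by omega)
  have hE1 : Cmat p q (r+2) (Fin.last (2+q+r+1)) (Fin.last (2+q+r+1)) = 2 := by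
    show Cent p q (r+2) (2+q+r+1) (2+q+r+1) = 2
    exact cent_diag p q (r+2) _ (by omega)
  have hE2 : Cmat p q (r+2) (Fin.last (2+q+r+1)) ((Fin.last (2+q+r)).castSucc) = -1 := by
    show Cent p q (r+2) (2+q+r+1) (2+q+r) = -1
    exact cent_near p q (r+2) _ (by omega) (by omega)
  have hE3 : Cmat p q (r+2) ((Fin.last (2+q+r)).castSucc) (Fin.last (2+q+r+1)) = -1 := by
    show Cent p q (r+2) (2+q+r) (2+q+r+1) = -1
    exact cent_near' p q (r+2) _ (by omega) (by omega)
  have hM1 : (Cmat p q (r+2)).submatrix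
      (Fin.castSucc : Fin (2+q+r+1) → Fin (2+q+r+1+1)) Fin.castSucc = Cmat p q (r+1) := by
    ext i j
    have hi : (i:ℕ) < 2+q+r+1 := i.isLt
    have hj : (j:ℕ) < 2+q+r+1 := j.isLt
    show Cent p q (r+2) (i : ℕ) (j : ℕ) = Cent p q (r+1) (i : ℕ) (j : ℕ)
    exact cent_ext p q (by omega) (by omega) (by omega)
  have hM2 : (Cmat p q (r+2)).submatrix
      (fun i : Fin (2+q+r) => i.castSucc.castSucc)
      (fun j : Fin (2+q+r) => j.castSucc.castSucc) = Cmat p q r := by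
    ext i j
    have hi : (i:ℕ) < 2+q+r := i.isLt
    have hj : (j:ℕ) < 2+q+r := j.isLt
    show Cent p q (r+2) (i : ℕ) (j : ℕ) = Cent p q r (i : ℕ) (j : ℕ)
    exact cent_ext p q (by omega) (by omega) (by omega)
  have key := aux_det (2+q+r) (Cmat p q (r+2)) hrow hcol
  rw [hE1, hE2, hE3, hM1, hM2] at key
  have key2 : cdet p q (r+2) = 2 * cdet p q (r+1) - -1 * -1 * cdet p q r := key
  rw [key2]; ring
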